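/- ℓ₁ is not weak Rudin–Keisler reducible to I_wf: there is no infinite set A ⊆ 2^{<ω} and function f : A → ℕ such that for every X ⊆ ℕ, X ∈ ℓ₁ if and only if f⁻¹[X] ∈ I_wf. -/

import Mathlib

/-- The summable ideal `ℓ₁ = {X ⊆ ℕ : ∑_{n ∈ X} 1/(n+1) < ∞}`. -/
def ell1 : Set (Set ℕ) := {X | Summable (fun n : X => (1 : ℝ) / ((n : ℕ) + 1))}

/-- The length-`n` initial segment of an infinite binary sequence, as a binary string. -/
def initSeg (y : ℕ → Bool) (n : ℕ) : List Bool := List.ofFn (fun i : Fin n => y i)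

/-- `[X]`: the set of infinite branches hitting `X` infinitely often. -/
def branches (X : Set (List Bool)) : Set (ℕ → Bool) :=
  {y | ∀ N : ℕ, ∃ n ≥ N, initSeg y n ∈ X}

/-- The ideal of well-founded sets of binary strings: `X` with `[X] = ∅`. -/
def Iwf : Set (Set (List Bool)) := {X | branches X = ∅}

/-- Weak Rudin–Keisler reducibility: there is an infinite `B' ⊆ B` and `f : B' → A`
such that `X ∈ I ↔ f⁻¹[X] ∈ J` for all `X ⊆ A`. -/
def wRK {A B : Type*} (I : Set (Set A)) (J : Set (Set B)) : Prop :=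
  ∃ (B' : Set B) (f : B' → A), B'.Infinite ∧
    ∀ X : Set A, X ∈ I ↔ (Subtype.val '' (f ⁻¹' X)) ∈ J

/-!
Since `ℕ ∉ ℓ₁`, the domain of a reduction is not in `I_wf`, so some branch `y` passes through
it infinitely often. Along `y` the reduction takes either finitely many values, which form a set
in `ℓ₁`, or infinitely many, among which the sparse subset of the `2 ^ k`-th ones lies in `ℓ₁`.
Either way some `X ∈ ℓ₁` is hit at infinitely many initial segments of `y`, so `y` is a branch
of the preimage of `X`, which therefore is not in `I_wf`.
-/

lemma mem_ell1_of_finite {X : Set ℕ} (hX : X.Finite) : X ∈ ell1 :=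
  have := hX.to_subtype
  Summable.of_finite

lemma univ_notMem_ell1 : Set.univ ∉ ell1 := by
  intro h
  have : Summable fun n : ℕ => 1 / ((n : ℝ) + 1) := (Equiv.Set.univ ℕ).symm.summable_iff.2 h
  exact Real.not_summable_one_div_natCast ((summable_nat_add_iff 1).1 (mod_cast this))

lemma range_mem_ell1_of_pow_le {g : ℕ → ℕ} (hg : g.Injective) (hpow : ∀ k, 2 ^ k ≤ g k) :
    Set.range g ∈ ell1 := by
  have : Summable fun k => 1 / ((g k : ℝ) + 1) :=
    summable_geometric_two.of_nonneg_of_le (fun k => by positivity) fun k => by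
      rw [div_pow, one_pow]
      refine one_div_le_one_div_of_le (by positivity) ?_
      calc (2 : ℝ) ^ k ≤ g k := mod_cast hpow k
        _ ≤ g k + 1 := le_add_of_nonneg_right zero_le_one
  exact (Equiv.ofInjective g hg).summable_iff.1 this

lemma Set.Infinite.exists_subset_infinite_mem_ell1 {s : Set ℕ} (hs : s.Infinite) :
    ∃ t ⊆ s, t.Infinite ∧ t ∈ ell1 := by
  have hmono := Nat.nth_strictMono hs
  have hinj : (fun k => Nat.nth (· ∈ s) (2 ^ k)).Injective :=
    hmono.injective.comp (Nat.pow_right_injective le_rfl)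
  refine ⟨Set.range fun k => Nat.nth (· ∈ s) (2 ^ k), ?_, Set.infinite_range_of_injective hinj,
    range_mem_ell1_of_pow_le hinj fun k => hmono.id_le _⟩
  rintro _ ⟨k, rfl⟩
  exact Nat.nth_mem_of_infinite hs _

lemma exists_mem_ell1_infinite_preimage {ι : Type*} [Infinite ι] (h : ι → ℕ) :
    ∃ X ∈ ell1, (h ⁻¹' X).Infinite := by
  by_cases hfin : (Set.range h).Finite
  · exact ⟨_, mem_ell1_of_finite hfin, by simpa using Set.infinite_univ⟩
  obtain ⟨t, hts, htinf, ht⟩ := Set.Infinite.exists_subset_infinite_mem_ell1 hfin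
  refine ⟨t, ht, Set.Infinite.of_image h ?_⟩
  rwa [Set.image_preimage_eq_of_subset hts]

lemma mem_branches_iff_infinite {X : Set (List Bool)} {y : ℕ → Bool} :
    y ∈ branches X ↔ {n | initSeg y n ∈ X}.Infinite :=
  Filter.frequently_atTop.symm.trans Nat.frequently_atTop_iff_infinite

/-- `ℓ₁` is not weak Rudin–Keisler reducible to `I_wf`. -/
theorem ell1_not_wRK_Iwf : ¬ wRK ell1 Iwf := by
  rintro ⟨B', f, -, hred⟩
  have hB' : B' ∉ Iwf := by simpa using (hred Set.univ).not.1 univ_notMem_ell1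
  obtain ⟨y, hy⟩ := Set.nonempty_iff_ne_empty.2 hB'
  rw [mem_branches_iff_infinite] at hy
  have := hy.to_subtype
  obtain ⟨X, hX, hpre⟩ :=
    exists_mem_ell1_infinite_preimage fun n : {n | initSeg y n ∈ B'} => f ⟨_, n.2⟩
  have hyX : y ∈ branches (Subtype.val '' (f ⁻¹' X)) := by
    rw [mem_branches_iff_infinite]
    refine (hpre.image Subtype.val_injective.injOn).mono ?_
    rintro _ ⟨n, hn, rfl⟩
    exact ⟨_, hn, rfl⟩
  rw [(hred X).1 hX] at hyX
  exact hyX
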